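/- arXiv:2205.08079 — 4 statements merged into one kernel-verified Lean document; each statement's English description precedes it below -/
import Mathlib

section
/- In a marriage problem with strict preferences, the set of stable matchings is nonempty: there always exists a matching that is individually rational and has no blocking pair. -/
open scoped Classical

/-- A marriage problem's (strict) preference profile, given by injective rank
functions over potential partners plus the option `none` of staying single
(lower rank = more preferred). -/
structure Pref (M W : Type) where
  mrank : M → Option W → ℕ
  wrank : W → Option M → ℕ
  minj : ∀ a x y, mrank a x = mrank a y → x = y
  winj : ∀ b x y, wrank b x = wrank b y → x = y

/-- A one-to-one matching between `M` and `W` (with `none` = single). -/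
structure Matching (M W : Type) where
  mu : M → Option W
  nu : W → Option M
  consistent : ∀ a b, mu a = some b ↔ nu b = some a

/-- No player strictly prefers being single to the assigned partner. -/
def IndivRational {M W : Type} (P : Pref M W) (μ : Matching M W) : Prop :=
  (∀ a, ¬ P.mrank a none < P.mrank a (μ.mu a)) ∧
  (∀ b, ¬ P.wrank b none < P.wrank b (μ.nu b))

/-- The pair `(a, b)` blocks `μ`. -/
def Blocks {M W : Type} (P : Pref M W) (μ : Matching M W) (a : M) (b : W) : Prop :=
  P.mrank a (some b) < P.mrank a (μ.mu a) ∧ P.wrank b (some a) < P.wrank b (μ.nu b)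

/-- Stability: individual rationality together with absence of blocking pairs. -/
def StableMatching {M W : Type} (P : Pref M W) (μ : Matching M W) : Prop :=
  IndivRational P μ ∧ ∀ a b, ¬ Blocks P μ a b

section GS

variable {M W : Type} [Fintype M] [Fintype W]

lemma exists_min_on {α : Type} [Finite α] (f : α → ℕ) (S : Set α) (hS : S.Nonempty) :
    ∃ x ∈ S, ∀ y ∈ S, f x ≤ f y := by
  haveI : Nonempty S := hS.to_subtype
  obtain ⟨x, hx⟩ := Finite.exists_min (fun x : S => f x.val)
  exact ⟨x.val, x.2, fun y hy => hx ⟨y, hy⟩⟩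

def mset (P : Pref M W) (q : W → Option M) (a : M) : Set (Option W) :=
  {x | ∀ b, x = some b → P.wrank b (some a) ≤ P.wrank b (q b)}

def wset (P : Pref M W) (p : M → Option W) (b : W) : Set (Option M) :=
  {y | ∀ a, y = some a → P.mrank a (some b) ≤ P.mrank a (p a)}

lemma none_mem_mset (P : Pref M W) (q : W → Option M) (a : M) :
    (none : Option W) ∈ mset P q a := by intro b h; cases h

lemma none_mem_wset (P : Pref M W) (p : M → Option W) (b : W) :
    (none : Option M) ∈ wset P p b := by intro a h; cases h

noncomputable def mch (P : Pref M W) (q : W → Option M) (a : M) : Option W :=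
  (exists_min_on (P.mrank a) (mset P q a) ⟨none, none_mem_mset P q a⟩).choose

lemma mch_mem (P : Pref M W) (q : W → Option M) (a : M) : mch P q a ∈ mset P q a :=
  (exists_min_on (P.mrank a) (mset P q a) ⟨none, none_mem_mset P q a⟩).choose_spec.1

lemma mch_le (P : Pref M W) (q : W → Option M) (a : M) {x : Option W}
    (hx : x ∈ mset P q a) : P.mrank a (mch P q a) ≤ P.mrank a x :=
  (exists_min_on (P.mrank a) (mset P q a) ⟨none, none_mem_mset P q a⟩).choose_spec.2 x hx

noncomputable def wch (P : Pref M W) (p : M → Option W) (b : W) : Option M :=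
  (exists_min_on (P.wrank b) (wset P p b) ⟨none, none_mem_wset P p b⟩).choose

lemma wch_mem (P : Pref M W) (p : M → Option W) (b : W) : wch P p b ∈ wset P p b :=
  (exists_min_on (P.wrank b) (wset P p b) ⟨none, none_mem_wset P p b⟩).choose_spec.1

lemma wch_le (P : Pref M W) (p : M → Option W) (b : W) {y : Option M}
    (hy : y ∈ wset P p b) : P.wrank b (wch P p b) ≤ P.wrank b y :=
  (exists_min_on (P.wrank b) (wset P p b) ⟨none, none_mem_wset P p b⟩).choose_spec.2 y hy

/-- Pre-matchings. -/
abbrev PreM (M W : Type) := (M → Option W) × (W → Option M)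

noncomputable def Tgs (P : Pref M W) (v : PreM M W) : PreM M W :=
  (fun a => mch P v.2 a, fun b => wch P v.1 b)

/-- Men weakly better, women weakly worse. -/
def ple (P : Pref M W) (v w : PreM M W) : Prop :=
  (∀ a, P.mrank a (w.1 a) ≤ P.mrank a (v.1 a)) ∧
  (∀ b, P.wrank b (v.2 b) ≤ P.wrank b (w.2 b))

lemma ple_trans {P : Pref M W} {u v w : PreM M W} (h1 : ple P u v) (h2 : ple P v w) :
    ple P u w :=
  ⟨fun a => (h2.1 a).trans (h1.1 a), fun b => (h1.2 b).trans (h2.2 b)⟩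

lemma ple_antisymm {P : Pref M W} {v w : PreM M W} (h1 : ple P v w) (h2 : ple P w v) :
    v = w := by
  have h1' : v.1 = w.1 := funext fun a => P.minj a _ _ (le_antisymm (h2.1 a) (h1.1 a))
  have h2' : v.2 = w.2 := funext fun b => P.winj b _ _ (le_antisymm (h1.2 b) (h2.2 b))
  exact Prod.ext h1' h2'

lemma Tgs_mono {P : Pref M W} {v w : PreM M W} (h : ple P v w) : ple P (Tgs P v) (Tgs P w) := by
  constructor
  · intro a
    have hsub : mset P v.2 a ⊆ mset P w.2 a := by
      intro x hx b hb
      exact (hx b hb).trans (h.2 b)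
    exact mch_le P w.2 a (hsub (mch_mem P v.2 a))
  · intro b
    have hsub : wset P w.1 b ⊆ wset P v.1 b := by
      intro y hy a ha
      exact (hy a ha).trans (h.1 a)
    exact wch_le P v.1 b (hsub (wch_mem P w.1 b))

end GS


/-- In a marriage problem with strict preferences, a stable
matching always exists. -/
theorem stable_matching_exists {M W : Type} [Fintype M] [Fintype W] (P : Pref M W) :
    ∃ μ : Matching M W, StableMatching P μ := by
  -- bottom element: men at their worst, women at their best
  set v0 : PreM M W :=
    (fun a => (Finite.exists_max (P.mrank a)).choose,
     fun b => (Finite.exists_min (P.wrank b)).choose) with hv0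
  have hbot : ∀ w : PreM M W, ple P v0 w := by
    intro w
    exact ⟨fun a => (Finite.exists_max (P.mrank a)).choose_spec _,
           fun b => (Finite.exists_min (P.wrank b)).choose_spec _⟩
  set f : ℕ → PreM M W := fun n => (Tgs P)^[n] v0 with hf
  have hstep : ∀ n, ple P (f n) (f (n + 1)) := by
    intro n
    induction n with
    | zero => exact hbot _
    | succ n ih =>
      have : f (n + 1) = Tgs P (f n) := Function.iterate_succ_apply' _ _ _
      have h2 : f (n + 2) = Tgs P (f (n + 1)) := Function.iterate_succ_apply' _ _ _
      rw [this, h2]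
      exact Tgs_mono ih
  have hmono : ∀ m n, m ≤ n → ple P (f m) (f n) := by
    intro m n hmn
    induction n with
    | zero =>
      have : m = 0 := Nat.le_zero.mp hmn
      subst this
      exact ⟨fun a => le_rfl, fun b => le_rfl⟩
    | succ n ih =>
      rcases Nat.lt_or_ge m (n + 1) with h | h
      · exact ple_trans (ih (Nat.lt_succ_iff.mp h)) (hstep n)
      · have : m = n + 1 := le_antisymm hmn h
        subst this
        exact ⟨fun a => le_rfl, fun b => le_rfl⟩
  -- pigeonhole: the chain stabilizes at a fixed point
  obtain ⟨m, n, hmn, heq⟩ := Finite.exists_ne_map_eq_of_infinite f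
  have key : ∀ m n : ℕ, m < n → f m = f n → Tgs P (f m) = f m := by
    intro m n h he
    have h1 : ple P (f m) (f (m + 1)) := hstep m
    have h2 : ple P (f (m + 1)) (f m) := by
      rw [he]; exact hmono (m + 1) n h
    have := ple_antisymm h2 h1
    rw [← Function.iterate_succ_apply' (Tgs P) m v0]
    exact this
  have hfix : ∃ v : PreM M W, Tgs P v = v := by
    rcases Ne.lt_or_gt hmn with h | h
    · exact ⟨f m, key m n h heq⟩
    · exact ⟨f n, key n m h heq.symm⟩
  obtain ⟨v, hv⟩ := hfix
  have hv1 : ∀ a, mch P v.2 a = v.1 a := fun a => congrFun (congrArg Prod.fst hv) a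
  have hv2 : ∀ b, wch P v.1 b = v.2 b := fun b => congrFun (congrArg Prod.snd hv) b
  -- build the matching
  have hcons : ∀ a b, v.1 a = some b ↔ v.2 b = some a := by
    intro a b
    constructor
    · intro h
      have hmem : v.1 a ∈ mset P v.2 a := hv1 a ▸ mch_mem P v.2 a
      have hw : P.wrank b (some a) ≤ P.wrank b (v.2 b) := hmem b h
      have hws : (some a : Option M) ∈ wset P v.1 b := by
        intro a' ha'
        have : a' = a := (Option.some.inj ha').symm
        subst this
        rw [h]
      have := wch_le P v.1 b hws
      rw [hv2 b] at this
      exact P.winj b _ _ (le_antisymm this hw)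
    · intro h
      have hmem : v.2 b ∈ wset P v.1 b := hv2 b ▸ wch_mem P v.1 b
      have hm : P.mrank a (some b) ≤ P.mrank a (v.1 a) := hmem a h
      have hms : (some b : Option W) ∈ mset P v.2 a := by
        intro b' hb'
        have : b' = b := (Option.some.inj hb').symm
        subst this
        rw [h]
      have := mch_le P v.2 a hms
      rw [hv1 a] at this
      exact P.minj a _ _ (le_antisymm this hm)
  refine ⟨⟨v.1, v.2, hcons⟩, ⟨?_, ?_⟩, ?_⟩
  · intro a hlt
    have := mch_le P v.2 a (none_mem_mset P v.2 a)
    rw [hv1 a] at this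
    exact absurd hlt (not_lt.mpr this)
  · intro b hlt
    have := wch_le P v.1 b (none_mem_wset P v.1 b)
    rw [hv2 b] at this
    exact absurd hlt (not_lt.mpr this)
  · rintro a b ⟨hm, hw⟩
    have hms : (some b : Option W) ∈ mset P v.2 a := by
      intro b' hb'
      have : b' = b := (Option.some.inj hb').symm
      subst this
      exact hw.le
    have := mch_le P v.2 a hms
    rw [hv1 a] at this
    exact absurd hm (not_lt.mpr this)
end

section
/- The matching produced by the man-proposing deferred acceptance algorithm is stable with respect to the input preference profile. -/
open scoped Classical

noncomputable section

variable {M W : Type} [Fintype M] [Fintype W]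

/-- `b` is acceptable to man `a`. -/
def mAcc (P : Pref M W) (a : M) (b : W) : Prop := P.mrank a (some b) < P.mrank a none

/-- `a` is acceptable to woman `b`. -/
def wAcc (P : Pref M W) (b : W) (a : M) : Prop := P.wrank b (some a) < P.wrank b none

/-- The state of the man-proposing deferred acceptance algorithm:
for each man, the index of the next woman on his list to propose to,
and for each woman, the proposer she currently (tentatively) holds. -/
structure DAState (M W : Type) where
  next : M → ℕ
  hold : W → Option M

/-- A man is free if no woman currently holds him. -/
def IsFree (s : DAState M W) (a : M) : Prop := ∀ b, s.hold b ≠ some a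

/-- The `k`-th woman (0-indexed) on man `a`'s list of acceptable women,
in decreasing order of preference. -/
def target (P : Pref M W) (a : M) (k : ℕ) : Option W :=
  if h : ∃ b : W, mAcc P a b ∧
      (Finset.univ.filter fun b' => mAcc P a b' ∧
        P.mrank a (some b') < P.mrank a (some b)).card = k
  then some h.choose else none

/-- Woman `b`'s most preferred acceptable man in the finite set `c` (if any). -/
def best (P : Pref M W) (b : W) (c : Finset M) : Option M :=
  if h : ∃ a ∈ c, wAcc P b a ∧ ∀ a' ∈ c, wAcc P b a' → P.wrank b (some a) ≤ P.wrank b (some a')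
  then some h.choose else none

/-- One round of the man-proposing deferred acceptance algorithm: every free
man proposes to the next woman on his list; every woman holds the best
acceptable man among her current proposers and the man she held before. -/
def daStep (P : Pref M W) (s : DAState M W) : DAState M W where
  next a := if IsFree s a ∧ (target P a (s.next a)).isSome then s.next a + 1 else s.next a
  hold b := best P b
    ((Finset.univ.filter fun a => IsFree s a ∧ target P a (s.next a) = some b) ∪
      (s.hold b).toFinset)

/-- The algorithm terminates when no free man has anyone left to propose to. -/
def Finished (P : Pref M W) (s : DAState M W) : Prop :=
  ∀ a, IsFree s a → target P a (s.next a) = none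

/-- Iterate the deferred acceptance rounds (with fuel). -/
def daRun (P : Pref M W) : ℕ → DAState M W → DAState M W
  | 0, s => s
  | n + 1, s => if Finished P s then s else daRun P n (daStep P s)

/-- The initial state: every man is free and about to propose to his favorite. -/
def daInit : DAState M W := ⟨fun _ => 0, fun _ => none⟩

/-- The final state of the man-proposing deferred acceptance algorithm
(the fuel is enough for the algorithm to have terminated). -/
def daFinal (P : Pref M W) : DAState M W :=
  daRun P (Fintype.card M * (Fintype.card W + 1) + 1) daInit

/-- The partner of woman `b` under the man-proposing DA matching. -/
def daNu (P : Pref M W) (b : W) : Option M := (daFinal P).hold b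

/-- The partner of man `a` under the man-proposing DA matching. -/
def daMu (P : Pref M W) (a : M) : Option W :=
  if h : ∃ b, (daFinal P).hold b = some a then some h.choose else none

/-- Man `a` proposes to woman `b` at some point during the run of the
man-proposing deferred acceptance algorithm. -/
def Proposes (P : Pref M W) (a : M) (b : W) : Prop :=
  ∃ n, IsFree (daRun P n daInit) a ∧ target P a ((daRun P n daInit).next a) = some b

end

namespace DAAux

variable {M W : Type} [Fintype M] [Fintype W]

/-- The set of acceptable women strictly preferred by `a` to `b`. -/
noncomputable def Sset (P : Pref M W) (a : M) (b : W) : Finset W :=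
  Finset.univ.filter fun b' => mAcc P a b' ∧ P.mrank a (some b') < P.mrank a (some b)

lemma self_notMem_Sset (P : Pref M W) (a : M) (b : W) : b ∉ Sset P a b := by
  simp [Sset]

lemma target_spec {P : Pref M W} {a : M} {k : ℕ} {b : W}
    (h : target P a k = some b) : mAcc P a b ∧ (Sset P a b).card = k := by
  unfold target at h
  split at h
  case isTrue hex =>
    obtain ⟨h1, h2⟩ := hex.choose_spec
    injection h with h
    subst h
    exact ⟨h1, h2⟩
  case isFalse => simp at h

lemma Sset_card_lt {P : Pref M W} {a : M} {b b' : W} (hb : mAcc P a b)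
    (hlt : P.mrank a (some b) < P.mrank a (some b')) :
    (Sset P a b).card < (Sset P a b').card := by
  have hsub : insert b (Sset P a b) ⊆ Sset P a b' := by
    intro x hx
    rcases Finset.mem_insert.mp hx with rfl | hx
    · simp [Sset, hb, hlt]
    · simp only [Sset, Finset.mem_filter, Finset.mem_univ, true_and] at hx ⊢
      exact ⟨hx.1, lt_trans hx.2 hlt⟩
  calc (Sset P a b).card < (insert b (Sset P a b)).card := by
        rw [Finset.card_insert_of_notMem (self_notMem_Sset P a b)]; omega
    _ ≤ (Sset P a b').card := Finset.card_le_card hsub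

lemma Sset_card_inj {P : Pref M W} {a : M} {b b' : W} (hb : mAcc P a b)
    (hb' : mAcc P a b') (h : (Sset P a b).card = (Sset P a b').card) : b = b' := by
  by_contra hne
  have hrne : P.mrank a (some b) ≠ P.mrank a (some b') := by
    intro he
    exact hne (Option.some.inj (P.minj a _ _ he))
  rcases lt_or_gt_of_ne hrne with hlt | hlt
  · exact absurd h (Nat.ne_of_lt (Sset_card_lt hb hlt))
  · exact absurd h.symm (Nat.ne_of_lt (Sset_card_lt hb' hlt))

lemma target_achieves {P : Pref M W} {a : M} {b : W} (hb : mAcc P a b) :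
    target P a (Sset P a b).card = some b := by
  unfold target
  have hex : ∃ b0 : W, mAcc P a b0 ∧
      (Finset.univ.filter fun b' => mAcc P a b' ∧
        P.mrank a (some b') < P.mrank a (some b0)).card = (Sset P a b).card :=
    ⟨b, hb, rfl⟩
  rw [dif_pos hex]
  exact congrArg some (Sset_card_inj hex.choose_spec.1 hb hex.choose_spec.2)

lemma Sset_card_lt_acc_card {P : Pref M W} {a : M} {b : W} (hb : mAcc P a b) :
    (Sset P a b).card < (Finset.univ.filter fun b' => mAcc P a b').card := by
  apply Finset.card_lt_card
  constructor
  · intro x hx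
    simp only [Sset, Finset.mem_filter, Finset.mem_univ, true_and] at hx ⊢
    exact hx.1
  · intro hsub
    exact self_notMem_Sset P a b (hsub (by simp [hb]))

lemma target_none {P : Pref M W} {a : M} {k : ℕ} {b : W}
    (h : target P a k = none) (hb : mAcc P a b) : (Sset P a b).card < k := by
  by_contra hge
  push_neg at hge
  -- show ∃ b'', mAcc ∧ card Sset = k, contradicting h
  set A : Finset W := Finset.univ.filter fun b' => mAcc P a b' with hA
  have hinj : Set.InjOn (fun b' => (Sset P a b').card) A := by
    intro x hx y hy hxy
    simp only [hA, Finset.coe_filter, Set.mem_setOf_eq] at hx hy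
    exact Sset_card_inj hx.2 hy.2 hxy
  have hcard : (A.image fun b' => (Sset P a b').card).card = A.card :=
    Finset.card_image_of_injOn hinj
  have hsub : (A.image fun b' => (Sset P a b').card) ⊆ Finset.range A.card := by
    intro x hx
    obtain ⟨b', hb', rfl⟩ := Finset.mem_image.mp hx
    simp only [hA, Finset.mem_filter, Finset.mem_univ, true_and] at hb'
    exact Finset.mem_range.mpr (Sset_card_lt_acc_card hb')
  have heq : (A.image fun b' => (Sset P a b').card) = Finset.range A.card :=
    Finset.eq_of_subset_of_card_le hsub (by rw [hcard, Finset.card_range])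
  have hkA : k < A.card := lt_of_le_of_lt hge (Sset_card_lt_acc_card hb)
  have hk : k ∈ A.image fun b' => (Sset P a b').card := by
    rw [heq]; exact Finset.mem_range.mpr hkA
  obtain ⟨b'', hb'', hbk⟩ := Finset.mem_image.mp hk
  simp only [hA, Finset.mem_filter, Finset.mem_univ, true_and] at hb''
  have : target P a k ≠ none := by
    unfold target
    rw [dif_pos ⟨b'', hb'', hbk⟩]
    simp
  exact this h

lemma best_spec {P : Pref M W} {b : W} {c : Finset M} {a : M}
    (h : best P b c = some a) :
    a ∈ c ∧ wAcc P b a ∧ ∀ a' ∈ c, wAcc P b a' →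
      P.wrank b (some a) ≤ P.wrank b (some a') := by
  unfold best at h
  split at h
  case isTrue hex =>
    injection h with h
    subst h
    exact hex.choose_spec
  case isFalse => simp at h

lemma best_isSome {P : Pref M W} {b : W} {c : Finset M} {a : M}
    (hac : a ∈ c) (hw : wAcc P b a) :
    ∃ a1, best P b c = some a1 ∧ a1 ∈ c ∧ wAcc P b a1 ∧
      P.wrank b (some a1) ≤ P.wrank b (some a) := by
  have hne : (c.filter fun a' => wAcc P b a').Nonempty :=
    ⟨a, Finset.mem_filter.mpr ⟨hac, hw⟩⟩
  obtain ⟨a0, ha0, hmin⟩ :=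
    Finset.exists_min_image (c.filter fun a' => wAcc P b a')
      (fun a' => P.wrank b (some a')) hne
  simp only [Finset.mem_filter] at ha0
  have hex : ∃ a' ∈ c, wAcc P b a' ∧ ∀ a'' ∈ c, wAcc P b a'' →
      P.wrank b (some a') ≤ P.wrank b (some a'') := by
    refine ⟨a0, ha0.1, ha0.2, fun a'' ha'' hw'' =>
      hmin a'' (Finset.mem_filter.mpr ⟨ha'', hw''⟩)⟩
  unfold best
  rw [dif_pos hex]
  obtain ⟨h1, h2, h3⟩ := hex.choose_spec
  exact ⟨hex.choose, rfl, h1, h2, h3 a hac hw⟩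

/-- The set of proposers considered by woman `b` in one step. -/
noncomputable def Uset (P : Pref M W) (s : DAState M W) (b : W) : Finset M :=
  (Finset.univ.filter fun a => IsFree s a ∧ target P a (s.next a) = some b) ∪
    (s.hold b).toFinset

lemma daStep_hold (P : Pref M W) (s : DAState M W) (b : W) :
    (daStep P s).hold b = best P b (Uset P s b) := rfl

lemma mem_Uset {P : Pref M W} {s : DAState M W} {b : W} {a : M} :
    a ∈ Uset P s b ↔
      (IsFree s a ∧ target P a (s.next a) = some b) ∨ s.hold b = some a := by
  simp only [Uset, Finset.mem_union, Finset.mem_filter, Finset.mem_univ, true_and,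
    Option.mem_toFinset]
  constructor
  · rintro (h | h)
    · exact Or.inl h
    · exact Or.inr (Option.mem_def.mp h)
  · rintro (h | h)
    · exact Or.inl h
    · exact Or.inr (Option.mem_def.mpr h)

lemma not_free_of_hold {s : DAState M W} {b : W} {a : M} (h : s.hold b = some a) :
    ¬ IsFree s a := fun hf => hf b h

/-- The invariant maintained by the DA algorithm. -/
structure Inv (P : Pref M W) (s : DAState M W) : Prop where
  macc : ∀ b a, s.hold b = some a → mAcc P a b
  wacc : ∀ b a, s.hold b = some a → wAcc P b a
  tgt : ∀ b a, s.hold b = some a → ∃ k, s.next a = k + 1 ∧ target P a k = some b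
  uniq : ∀ a b b', s.hold b = some a → s.hold b' = some a → b = b'
  bound : ∀ a, s.next a ≤ Fintype.card W

lemma daStep_next (P : Pref M W) (s : DAState M W) (a : M) :
    (daStep P s).next a =
      if IsFree s a ∧ (target P a (s.next a)).isSome then s.next a + 1
      else s.next a := rfl

lemma inv_daStep {P : Pref M W} {s : DAState M W} (hinv : Inv P s) :
    Inv P (daStep P s) := by
  constructor
  · intro b a h
    rw [daStep_hold] at h
    obtain ⟨hmem, _, _⟩ := best_spec h
    rcases mem_Uset.mp hmem with ⟨_, ht⟩ | hh
    · exact (target_spec ht).1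
    · exact hinv.macc b a hh
  · intro b a h
    rw [daStep_hold] at h
    exact (best_spec h).2.1
  · intro b a h
    rw [daStep_hold] at h
    obtain ⟨hmem, _, _⟩ := best_spec h
    rcases mem_Uset.mp hmem with ⟨hfree, ht⟩ | hh
    · refine ⟨s.next a, ?_, ht⟩
      rw [daStep_next, if_pos ⟨hfree, by rw [ht]; rfl⟩]
    · obtain ⟨k, hk1, hk2⟩ := hinv.tgt b a hh
      refine ⟨k, ?_, hk2⟩
      rw [daStep_next, if_neg (fun hc => not_free_of_hold hh hc.1)]
      exact hk1
  · intro a b b' h h'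
    rw [daStep_hold] at h h'
    obtain ⟨hmem, _, _⟩ := best_spec h
    obtain ⟨hmem', _, _⟩ := best_spec h'
    rcases mem_Uset.mp hmem with ⟨hfree, ht⟩ | hh
    · rcases mem_Uset.mp hmem' with ⟨_, ht'⟩ | hh'
      · rw [ht] at ht'; injection ht'
      · exact absurd hfree (not_free_of_hold hh')
    · rcases mem_Uset.mp hmem' with ⟨hfree', _⟩ | hh'
      · exact absurd hfree' (not_free_of_hold hh)
      · exact hinv.uniq a b b' hh hh'
  · intro a
    rw [daStep_next]
    split
    case isTrue hc =>
      obtain ⟨b, hb⟩ := Option.isSome_iff_exists.mp hc.2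
      have h2 := (target_spec hb).2
      have h3 := Sset_card_lt_acc_card (target_spec hb).1
      have h4 : (Finset.univ.filter fun b' => mAcc P a b').card ≤ Fintype.card W :=
        le_trans (Finset.card_le_card (Finset.filter_subset _ _)) (le_of_eq (Finset.card_univ))
      omega
    case isFalse => exact hinv.bound a

lemma inv_daInit (P : Pref M W) : Inv P (daInit : DAState M W) := by
  constructor <;> intro a <;> simp [daInit]

/-- One round, expressed as a step function. -/
noncomputable def gstep (P : Pref M W) (s : DAState M W) : DAState M W :=
  if Finished P s then s else daStep P s

lemma daRun_of_finished (P : Pref M W) {s : DAState M W} (h : Finished P s) :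
    ∀ n, daRun P n s = s
  | 0 => rfl
  | n + 1 => by rw [daRun, if_pos h]

lemma daRun_succ' (P : Pref M W) (n : ℕ) (s : DAState M W) :
    daRun P (n + 1) s = daRun P n (gstep P s) := by
  rw [daRun, gstep]
  split
  case isTrue h => rw [daRun_of_finished P h]
  case isFalse => rfl

lemma daRun_succ (P : Pref M W) : ∀ (n : ℕ) (s : DAState M W),
    daRun P (n + 1) s = gstep P (daRun P n s)
  | 0, s => daRun_succ' P 0 s
  | n + 1, s => by
    rw [daRun_succ' P (n + 1) s, daRun_succ P n (gstep P s), ← daRun_succ' P n s]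

/-- The run of the algorithm from the initial state. -/
noncomputable def frun (P : Pref M W) (n : ℕ) : DAState M W := daRun P n daInit

lemma frun_zero (P : Pref M W) : frun P 0 = (daInit : DAState M W) := rfl

lemma frun_succ (P : Pref M W) (n : ℕ) : frun P (n + 1) = gstep P (frun P n) :=
  daRun_succ P n daInit

lemma inv_frun (P : Pref M W) : ∀ n, Inv P (frun P n)
  | 0 => inv_daInit P
  | n + 1 => by
    rw [frun_succ, gstep]
    split
    · exact inv_frun P n
    · exact inv_daStep (inv_frun P n)

lemma gstep_next (P : Pref M W) (s : DAState M W) (a : M) :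
    (gstep P s).next a = s.next a ∨
      ((gstep P s).next a = s.next a + 1 ∧ ¬ Finished P s ∧ IsFree s a ∧
        ∃ b, target P a (s.next a) = some b) := by
  unfold gstep
  split
  case isTrue => exact Or.inl rfl
  case isFalse hnf =>
    rw [daStep_next]
    split
    case isTrue hc =>
      exact Or.inr ⟨rfl, hnf, hc.1, Option.isSome_iff_exists.mp hc.2⟩
    case isFalse => exact Or.inl rfl

lemma hold_mono_step {P : Pref M W} {s : DAState M W} (hinv : Inv P s) {b : W} {a : M}
    (h : s.hold b = some a) : ∃ a', (gstep P s).hold b = some a' ∧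
      P.wrank b (some a') ≤ P.wrank b (some a) := by
  unfold gstep
  split
  · exact ⟨a, h, le_refl _⟩
  · rw [daStep_hold]
    obtain ⟨a1, hb1, _, _, hle⟩ :=
      best_isSome (mem_Uset.mpr (Or.inr h)) (hinv.wacc b a h)
    exact ⟨a1, hb1, hle⟩

lemma hold_mono (P : Pref M W) {b : W} {a : M} {n : ℕ} (m : ℕ) (hnm : n ≤ m)
    (h : (frun P n).hold b = some a) :
    ∃ a', (frun P m).hold b = some a' ∧
      P.wrank b (some a') ≤ P.wrank b (some a) := by
  induction m, hnm using Nat.le_induction with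
  | base => exact ⟨a, h, le_refl _⟩
  | succ m hnm ih =>
    obtain ⟨a', ha', hle⟩ := ih
    obtain ⟨a'', ha'', hle'⟩ := hold_mono_step (inv_frun P m) ha'
    exact ⟨a'', by rw [frun_succ]; exact ha'', le_trans hle' hle⟩

lemma reach (P : Pref M W) (a : M) :
    ∀ N r, r < (frun P N).next a →
      ∃ n < N, (frun P n).next a = r ∧ (frun P (n + 1)).next a = r + 1 := by
  intro N
  induction N with
  | zero => intro r hr; simp [frun_zero, daInit] at hr
  | succ N ih =>
    intro r hr
    by_cases hc : r < (frun P N).next a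
    · obtain ⟨n, hn, h1, h2⟩ := ih r hc
      exact ⟨n, Nat.lt_succ_of_lt hn, h1, h2⟩
    · push_neg at hc
      rw [frun_succ] at hr
      rcases gstep_next P (frun P N) a with he | ⟨he, _⟩
      · rw [he] at hr; omega
      · rw [he] at hr
        have hre : r = (frun P N).next a := by omega
        refine ⟨N, Nat.lt_succ_self N, hre.symm, ?_⟩
        rw [frun_succ, he, hre]

lemma propose_effect (P : Pref M W) {a : M} {b : W} {n r : ℕ}
    (h1 : (frun P n).next a = r) (h2 : (frun P (n + 1)).next a = r + 1)
    (ht : target P a r = some b) (hw : wAcc P b a) :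
    ∃ a1, (frun P (n + 1)).hold b = some a1 ∧
      P.wrank b (some a1) ≤ P.wrank b (some a) := by
  rw [frun_succ] at h2 ⊢
  rcases gstep_next P (frun P n) a with he | ⟨_, hnf, hfree, _⟩
  · rw [he, h1] at h2; omega
  · rw [gstep, if_neg hnf, daStep_hold]
    have hmem : a ∈ Uset P (frun P n) b :=
      mem_Uset.mpr (Or.inl ⟨hfree, by rw [h1]; exact ht⟩)
    obtain ⟨a1, hb1, _, _, hle⟩ := best_isSome hmem hw
    exact ⟨a1, hb1, hle⟩

/-- Sum of the `next` counters, used as a termination measure. -/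
noncomputable def msum (s : DAState M W) : ℕ := ∑ a : M, s.next a

lemma msum_le {P : Pref M W} {s : DAState M W} (hinv : Inv P s) :
    msum s ≤ Fintype.card M * Fintype.card W := by
  calc msum s ≤ ∑ _a : M, Fintype.card W :=
        Finset.sum_le_sum fun a _ => hinv.bound a
    _ = Fintype.card M * Fintype.card W := by
        rw [Finset.sum_const, Finset.card_univ, smul_eq_mul]

lemma msum_lt_daStep {P : Pref M W} {s : DAState M W} (hnf : ¬ Finished P s) :
    msum s < msum (daStep P s) := by
  unfold Finished at hnf
  push_neg at hnf
  obtain ⟨a, hfree, ht⟩ := hnf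
  have hpt : ∀ i ∈ Finset.univ, s.next i ≤ (daStep P s).next i := by
    intro i _
    rw [daStep_next]; split <;> omega
  have hst : s.next a < (daStep P s).next a := by
    rw [daStep_next, if_pos ⟨hfree, Option.isSome_iff_ne_none.mpr ht⟩]
    omega
  exact Finset.sum_lt_sum hpt ⟨a, Finset.mem_univ a, hst⟩

lemma finished_or_le (P : Pref M W) : ∀ n,
    Finished P (frun P n) ∨ n ≤ msum (frun P n) := by
  intro n
  induction n with
  | zero => exact Or.inr (Nat.zero_le _)
  | succ n ih =>
    by_cases hf : Finished P (frun P n)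
    · left
      rw [frun_succ, gstep, if_pos hf]
      exact hf
    · rcases ih with h | h
      · exact absurd h hf
      · right
        rw [frun_succ, gstep, if_neg hf]
        have := msum_lt_daStep (P := P) (s := frun P n) hf
        omega

/-- The fuel used by `daFinal`. -/
def fuelN (M W : Type) [Fintype M] [Fintype W] : ℕ :=
  Fintype.card M * (Fintype.card W + 1) + 1

lemma daFinal_eq_frun (P : Pref M W) : daFinal P = frun P (fuelN M W) := rfl

lemma finished_final (P : Pref M W) : Finished P (daFinal P) := by
  rw [daFinal_eq_frun]
  rcases finished_or_le P (fuelN M W) with h | h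
  · exact h
  · exfalso
    have h2 := msum_le (inv_frun P (fuelN M W))
    have h3 : fuelN M W = Fintype.card M * Fintype.card W + Fintype.card M + 1 := by
      unfold fuelN; ring
    omega

lemma inv_final (P : Pref M W) : Inv P (daFinal P) := by
  rw [daFinal_eq_frun]; exact inv_frun P (fuelN M W)

lemma daMu_some {P : Pref M W} {a : M} {b0 : W} (h : daMu P a = some b0) :
    (daFinal P).hold b0 = some a := by
  unfold daMu at h
  split at h
  case isTrue hex =>
    injection h with h
    subst h
    exact hex.choose_spec
  case isFalse => simp at h

lemma daMu_none {P : Pref M W} {a : M} (h : daMu P a = none) :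
    IsFree (daFinal P) a := by
  unfold daMu at h
  split at h
  case isTrue => simp at h
  case isFalse hne =>
    intro b hb
    exact hne ⟨b, hb⟩

/-- Every man ends up having proposed to each woman he ranks above his final
outcome; hence she holds someone at least as good as him. -/
lemma key_contradiction {P : Pref M W} {a : M} {b : W} (hm : mAcc P a b)
    (hw : wAcc P b a) (hr : (Sset P a b).card < (daFinal P).next a) :
    ∃ a2, (daFinal P).hold b = some a2 ∧
      P.wrank b (some a2) ≤ P.wrank b (some a) := by
  rw [daFinal_eq_frun] at hr ⊢
  obtain ⟨n, hnN, h1, h2⟩ := reach P a (fuelN M W) (Sset P a b).card hr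
  obtain ⟨a1, ha1, hle1⟩ := propose_effect P h1 h2 (target_achieves hm) hw
  obtain ⟨a2, ha2, hle2⟩ := hold_mono P (fuelN M W) hnN ha1
  exact ⟨a2, ha2, le_trans hle2 hle1⟩

end DAAux

/-- The matching produced by the man-proposing deferred
acceptance algorithm is stable with respect to the input preference profile:
it is individually rational and admits no blocking pair. -/
theorem da_stable {M W : Type} [Fintype M] [Fintype W] (P : Pref M W) :
    (∀ a, ¬ P.mrank a none < P.mrank a (daMu P a)) ∧
    (∀ b, ¬ P.wrank b none < P.wrank b (daNu P b)) ∧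
    (∀ a b, ¬ (P.mrank a (some b) < P.mrank a (daMu P a) ∧
               P.wrank b (some a) < P.wrank b (daNu P b))) := by
  classical
  have hinv : DAAux.Inv P (daFinal P) := DAAux.inv_final P
  have hfin : Finished P (daFinal P) := DAAux.finished_final P
  refine ⟨?_, ?_, ?_⟩
  · -- individual rationality for men
    intro a
    cases hmu : daMu P a with
    | none => exact lt_irrefl _
    | some b0 =>
      have hh := DAAux.daMu_some hmu
      have hacc : mAcc P a b0 := hinv.macc b0 a hh
      exact fun hc => absurd (lt_trans hacc hc) (lt_irrefl _)
  · -- individual rationality for women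
    intro b
    unfold daNu
    cases hb : (daFinal P).hold b with
    | none => exact lt_irrefl _
    | some a0 =>
      have hacc : wAcc P b a0 := hinv.wacc b a0 hb
      exact fun hc => absurd (lt_trans hacc hc) (lt_irrefl _)
  · -- no blocking pair
    rintro a b ⟨hmb, hwb⟩
    have hdnu : daNu P b = (daFinal P).hold b := rfl
    have hwacc : wAcc P b a := by
      rw [hdnu] at hwb
      cases hb : (daFinal P).hold b with
      | none => rw [hb] at hwb; exact hwb
      | some a0 =>
        rw [hb] at hwb
        exact lt_trans hwb (hinv.wacc b a0 hb)
    have hkey : mAcc P a b ∧ (DAAux.Sset P a b).card < (daFinal P).next a := by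
      cases hmu : daMu P a with
      | none =>
        rw [hmu] at hmb
        have hfree := DAAux.daMu_none hmu
        have htn : target P a ((daFinal P).next a) = none := hfin a hfree
        exact ⟨hmb, DAAux.target_none htn hmb⟩
      | some b0 =>
        rw [hmu] at hmb
        have hh := DAAux.daMu_some hmu
        have hacc0 : mAcc P a b0 := hinv.macc b0 a hh
        have hmacc : mAcc P a b := lt_trans hmb hacc0
        obtain ⟨k, hk1, hk2⟩ := hinv.tgt b0 a hh
        have hck : (DAAux.Sset P a b0).card = k := (DAAux.target_spec hk2).2
        have hlt : (DAAux.Sset P a b).card < (DAAux.Sset P a b0).card :=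
          DAAux.Sset_card_lt hmacc hmb
        exact ⟨hmacc, by omega⟩
    obtain ⟨a2, ha2, hle2⟩ := DAAux.key_contradiction hkey.1 hwacc hkey.2
    rw [hdnu, ha2] at hwb
    exact absurd hwb (not_lt.mpr hle2)
end

section
/- The man-proposing deferred acceptance algorithm yields the M-optimal stable matching: every man weakly prefers his partner under this matching to his partner under any other stable matching. -/
open scoped Classical

/-!
Throughout the run, no woman ever holds a man she strictly prefers to her partner under a
stable matching `ν`. Suppose she accepts such a man `m`, who is free and proposing down his list.
Had `m` preferred his own `ν`-partner `b'`, he would have proposed to `b'` earlier; `b'` then holds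
someone at least as good as `m` and, by the invariant, no better, i.e. `m` himself, which is
impossible as `m` is free. So `m` prefers her to `b'`, and the two block `ν`.

At termination, if a man `a` strictly preferred his `ν`-partner `b` to his deferred acceptance
outcome, he proposed to `b` at some point; by the same squeeze `b` holds `a` at the end, so `b`
is his outcome after all.
-/

namespace DeferredAcceptance

open Finset

lemma mrank_some_injective {M W : Type} {P : Pref M W} {a : M} :
    Function.Injective fun b : W => P.mrank a (some b) :=
  fun _ _ h => Option.some_injective _ (P.minj a _ _ h)

noncomputable section Ranking

variable {M W : Type} [Fintype W] (P : Pref M W) (a : M)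

def acceptable : Finset W := univ.filter (mAcc P a)

def listPos (b : W) : ℕ :=
  (univ.filter fun b' => mAcc P a b' ∧ P.mrank a (some b') < P.mrank a (some b)).card

variable {P a}

lemma listPos_lt_listPos {b b' : W} (hb' : mAcc P a b')
    (h : P.mrank a (some b') < P.mrank a (some b)) : listPos P a b' < listPos P a b := by
  refine card_lt_card <| (ssubset_iff_of_subset fun x hx => ?_).2 ⟨b', ?_, ?_⟩
  · simp only [mem_filter, mem_univ, true_and] at hx ⊢
    exact ⟨hx.1, hx.2.trans h⟩
  · simp [hb', h]
  · simp

lemma listPos_injOn : Set.InjOn (listPos P a) (acceptable P a) := by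
  intro b hb b' hb' h
  simp only [acceptable, coe_filter, mem_univ, true_and] at hb hb'
  by_contra hne
  rcases lt_or_gt_of_ne (mrank_some_injective.ne hne) with hlt | hlt
  · exact (listPos_lt_listPos hb hlt).ne h
  · exact (listPos_lt_listPos hb' hlt).ne' h

lemma listPos_lt_card {b : W} (hb : mAcc P a b) : listPos P a b < (acceptable P a).card := by
  refine card_lt_card <| (ssubset_iff_of_subset fun x hx => ?_).2 ⟨b, ?_, ?_⟩
  · simp only [acceptable, mem_filter, mem_univ, true_and] at hx ⊢
    exact hx.1
  · simpa [acceptable] using hb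
  · simp

lemma image_listPos :
    (acceptable P a).image (listPos P a) = range (acceptable P a).card :=
  eq_of_subset_of_card_le
    (image_subset_iff.2 fun _ hb => mem_range.2 <| listPos_lt_card (mem_filter.1 hb).2)
    (by rw [card_range, card_image_of_injOn listPos_injOn])

lemma target_eq_some_iff {k : ℕ} {b : W} :
    target P a k = some b ↔ mAcc P a b ∧ listPos P a b = k := by
  rw [target]
  split_ifs with h
  · obtain ⟨hacc, hpos⟩ := h.choose_spec
    refine ⟨fun hb => Option.some_injective _ hb ▸ ⟨hacc, hpos⟩, fun ⟨hb, hbk⟩ => ?_⟩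
    rw [listPos_injOn (by simpa [acceptable] using hacc) (by simpa [acceptable] using hb)
      (hpos.trans hbk.symm)]
  · simp only [false_iff, not_and]
    rintro hb rfl
    exact h ⟨b, hb, rfl⟩

lemma listPos_lt_of_target_eq_none {k : ℕ} (h : target P a k = none) {b : W}
    (hb : mAcc P a b) : listPos P a b < k := by
  by_contra! hk
  have hmem : k ∈ (acceptable P a).image (listPos P a) := by
    rw [image_listPos]
    exact mem_range.2 (hk.trans_lt (listPos_lt_card hb))
  obtain ⟨b₀, hb₀, rfl⟩ := mem_image.1 hmem
  rw [target_eq_some_iff.2 ⟨(mem_filter.1 hb₀).2, rfl⟩] at h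
  cases h

lemma lt_card_of_target_eq_some {k : ℕ} {b : W} (h : target P a k = some b) :
    k < Fintype.card W := by
  obtain ⟨hb, rfl⟩ := target_eq_some_iff.1 h
  exact (listPos_lt_card hb).trans_le (card_le_univ _)

end Ranking

section Best

variable {M W : Type} [Fintype M] {P : Pref M W} {b : W} {c : Finset M}

lemma best_spec {m : M} (h : best P b c = some m) : m ∈ c ∧ wAcc P b m := by
  rw [best] at h
  split_ifs at h with hex
  obtain ⟨hmem, hacc, -⟩ := hex.choose_spec
  exact Option.some_injective _ h ▸ ⟨hmem, hacc⟩

lemma wrank_best_le_none : P.wrank b (best P b c) ≤ P.wrank b none := by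
  rw [best]
  split_ifs with hex
  exacts [hex.choose_spec.2.1.le, le_rfl]

lemma wrank_best_le {m : M} (hm : m ∈ c) : P.wrank b (best P b c) ≤ P.wrank b (some m) := by
  by_cases hacc : wAcc P b m
  · obtain ⟨m₀, hm₀, hmin⟩ := (c.filter (wAcc P b)).exists_min_image
      (fun x => P.wrank b (some x)) ⟨m, mem_filter.2 ⟨hm, hacc⟩⟩
    have hex : ∃ a ∈ c, wAcc P b a ∧
        ∀ a' ∈ c, wAcc P b a' → P.wrank b (some a) ≤ P.wrank b (some a') :=
      ⟨m₀, (mem_filter.1 hm₀).1, (mem_filter.1 hm₀).2,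
        fun a' ha' hacc' => hmin a' (mem_filter.2 ⟨ha', hacc'⟩)⟩
    rw [best, dif_pos hex]
    exact hex.choose_spec.2.2 m hm hacc
  · exact wrank_best_le_none.trans (not_lt.1 hacc)

end Best

noncomputable section Run

variable {M W : Type} [Fintype W] {P : Pref M W} {s : DAState M W}

variable (P s) in
structure DAInvariant : Prop where
  hold_injective : ∀ b b' m, s.hold b = some m → s.hold b' = some m → b = b'
  exists_proposal_of_hold : ∀ b m, s.hold b = some m → ∃ k < s.next m, target P m k = some b
  wrank_hold_le_of_proposal : ∀ m k b, k < s.next m → target P m k = some b →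
    P.wrank b (s.hold b) ≤ P.wrank b (some m)
  next_le_card : ∀ a, s.next a ≤ Fintype.card W

lemma daInvariant_daInit : DAInvariant P (daInit : DAState M W) where
  hold_injective := by simp [daInit]
  exists_proposal_of_hold := by simp [daInit]
  wrank_hold_le_of_proposal := by simp [daInit]
  next_le_card _ := Nat.zero_le _

variable [Fintype M]

variable (P s) in
def candidates (b : W) : Finset M :=
  (univ.filter fun a => IsFree s a ∧ target P a (s.next a) = some b) ∪ (s.hold b).toFinset

lemma daStep_hold (b : W) : (daStep P s).hold b = best P b (candidates P s b) := rfl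

lemma daStep_next (a : M) :
    (daStep P s).next a =
      if IsFree s a ∧ (target P a (s.next a)).isSome then s.next a + 1 else s.next a := rfl

lemma mem_candidates {b : W} {m : M} :
    m ∈ candidates P s b ↔
      (IsFree s m ∧ target P m (s.next m) = some b) ∨ s.hold b = some m := by
  simp only [candidates, mem_union, mem_filter, mem_univ, true_and, Option.mem_toFinset,
    Option.mem_def]

lemma next_le_daStep_next (a : M) : s.next a ≤ (daStep P s).next a := by
  rw [daStep_next]
  split_ifs <;> omega

lemma wrank_daStep_hold_le (b : W) :
    P.wrank b ((daStep P s).hold b) ≤ P.wrank b (s.hold b) := by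
  rcases hb : s.hold b with _ | m
  · exact wrank_best_le_none
  · exact wrank_best_le (mem_candidates.2 (Or.inr hb))

lemma hold_injective_daStep (hI : DAInvariant P s) {b b' : W} {m : M}
    (h : (daStep P s).hold b = some m) (h' : (daStep P s).hold b' = some m) : b = b' := by
  rw [daStep_hold] at h h'
  rcases mem_candidates.1 (best_spec h).1 with ⟨hfree, ht⟩ | hheld <;>
    rcases mem_candidates.1 (best_spec h').1 with ⟨hfree', ht'⟩ | hheld'
  · exact Option.some_injective _ (ht.symm.trans ht')
  · exact absurd hheld' (hfree b')
  · exact absurd hheld (hfree' b)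
  · exact hI.hold_injective b b' m hheld hheld'

lemma exists_proposal_of_daStep_hold (hI : DAInvariant P s) {b : W} {m : M}
    (h : (daStep P s).hold b = some m) :
    ∃ k < (daStep P s).next m, target P m k = some b := by
  rw [daStep_hold] at h
  rcases mem_candidates.1 (best_spec h).1 with ⟨hfree, ht⟩ | hheld
  · refine ⟨s.next m, ?_, ht⟩
    rw [daStep_next, if_pos ⟨hfree, by rw [ht]; rfl⟩]
    omega
  · obtain ⟨k, hk, htk⟩ := hI.exists_proposal_of_hold b m hheld
    exact ⟨k, hk.trans_le (next_le_daStep_next m), htk⟩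

lemma wrank_daStep_hold_le_of_proposal (hI : DAInvariant P s) {m : M} {k : ℕ} {b : W}
    (hk : k < (daStep P s).next m) (ht : target P m k = some b) :
    P.wrank b ((daStep P s).hold b) ≤ P.wrank b (some m) := by
  have hold_le (hk : k < s.next m) (ht : target P m k = some b) :
      P.wrank b ((daStep P s).hold b) ≤ P.wrank b (some m) :=
    (wrank_daStep_hold_le b).trans (hI.wrank_hold_le_of_proposal m k b hk ht)
  rw [daStep_next] at hk
  split_ifs at hk with hprop
  · rcases Nat.lt_succ_iff_lt_or_eq.1 hk with hk | rfl
    · exact hold_le hk ht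
    · exact wrank_best_le (mem_candidates.2 (Or.inl ⟨hprop.1, ht⟩))
  · exact hold_le hk ht

lemma daInvariant_daStep (hI : DAInvariant P s) : DAInvariant P (daStep P s) where
  hold_injective _ _ _ := hold_injective_daStep hI
  exists_proposal_of_hold _ _ := exists_proposal_of_daStep_hold hI
  wrank_hold_le_of_proposal _ _ _ := wrank_daStep_hold_le_of_proposal hI
  next_le_card a := by
    rw [daStep_next]
    split_ifs with hprop
    · obtain ⟨b, hb⟩ := Option.isSome_iff_exists.1 hprop.2
      exact lt_card_of_target_eq_some hb
    · exact hI.next_le_card a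

lemma daRun_induction {Q : DAState M W → Prop} (hstep : ∀ s, Q s → Q (daStep P s)) :
    ∀ n s, Q s → Q (daRun P n s)
  | 0, _, hs => hs
  | n + 1, s, hs => by
    rw [daRun]
    split_ifs
    exacts [hs, daRun_induction hstep n _ (hstep s hs)]

lemma sum_next_lt_daStep (h : ¬ Finished P s) :
    ∑ a, s.next a < ∑ a, (daStep P s).next a := by
  simp only [Finished, not_forall] at h
  obtain ⟨a, hfree, ht⟩ := h
  refine sum_lt_sum (fun a _ => next_le_daStep_next a) ⟨a, mem_univ a, ?_⟩
  rw [daStep_next, if_pos ⟨hfree, Option.isSome_iff_ne_none.2 ht⟩]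
  omega

/-- Each unfinished round raises the total `∑ a, s.next a`, which never exceeds `|M| |W|`. -/
lemma finished_daRun : ∀ n (s : DAState M W), DAInvariant P s →
    Fintype.card M * Fintype.card W < n + ∑ a, s.next a → Finished P (daRun P n s)
  | 0, s, hI, hn => by
    have := sum_le_card_nsmul univ (fun a => s.next a) _ fun a _ => hI.next_le_card a
    simp only [card_univ, smul_eq_mul] at this
    omega
  | n + 1, s, hI, hn => by
    rw [daRun]
    split_ifs with hfin
    · exact hfin
    · exact finished_daRun n _ (daInvariant_daStep hI) (by have := sum_next_lt_daStep hfin; omega)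

lemma finished_daFinal : Finished P (daFinal P) := by
  refine finished_daRun _ _ daInvariant_daInit ?_
  simp only [daInit, sum_const_zero, add_zero, mul_add_one]
  omega

end Run

section Stable

variable {M W : Type} {P : Pref M W} {ν : Matching M W} {s : DAState M W}

lemma mAcc_of_stable (hν : StableMatching P ν) {a : M} {b : W} (h : ν.mu a = some b) :
    mAcc P a b := by
  have hIR := hν.1.1 a
  rw [h, not_lt] at hIR
  exact hIR.lt_of_ne fun heq => Option.some_ne_none _ (P.minj a _ _ heq)

variable (P ν s) in
def HoldsAtMostStablePartner : Prop :=
  ∀ a b, ν.mu a = some b → P.wrank b (some a) ≤ P.wrank b (s.hold b)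

lemma holdsAtMostStablePartner_daInit (hν : StableMatching P ν) :
    HoldsAtMostStablePartner P ν (daInit : DAState M W) := by
  intro a b hab
  have hIR := hν.1.2 b
  rwa [(ν.consistent a b).1 hab, not_lt] at hIR

variable [Fintype W]

/-- She holds someone at least as good as him, and by `hG` no one better. -/
lemma hold_eq_of_listPos_lt_next (hν : StableMatching P ν) (hI : DAInvariant P s)
    (hG : HoldsAtMostStablePartner P ν s) {a : M} {b : W} (hab : ν.mu a = some b)
    (h : listPos P a b < s.next a) : s.hold b = some a :=
  P.winj b _ _ <| le_antisymm
    (hI.wrank_hold_le_of_proposal a _ b h (target_eq_some_iff.2 ⟨mAcc_of_stable hν hab, rfl⟩))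
    (hG a b hab)

lemma mrank_lt_of_free_of_target (hν : StableMatching P ν) (hI : DAInvariant P s)
    (hG : HoldsAtMostStablePartner P ν s) {m : M} {b : W} (hfree : IsFree s m)
    (ht : target P m (s.next m) = some b) (hne : ν.mu m ≠ some b) :
    P.mrank m (some b) < P.mrank m (ν.mu m) := by
  obtain ⟨hacc, hpos⟩ := target_eq_some_iff.1 ht
  rcases hmb : ν.mu m with _ | b'
  · exact hacc
  · have hb' : b' ≠ b := fun h => hne (h ▸ hmb)
    refine (lt_or_gt_of_ne (mrank_some_injective.ne hb'.symm)).resolve_right fun hlt => ?_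
    have hproposed : listPos P m b' < s.next m :=
      hpos ▸ listPos_lt_listPos (mAcc_of_stable hν hmb) hlt
    exact hfree b' (hold_eq_of_listPos_lt_next hν hI hG hmb hproposed)

variable [Fintype M]

lemma holdsAtMostStablePartner_daStep (hν : StableMatching P ν) (hI : DAInvariant P s)
    (hG : HoldsAtMostStablePartner P ν s) : HoldsAtMostStablePartner P ν (daStep P s) := by
  intro a b hab
  have hba := (ν.consistent a b).1 hab
  by_contra! hlt
  rcases hh : (daStep P s).hold b with _ | m
  · exact hν.1.2 b (by rw [hba]; rwa [hh] at hlt)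
  rw [hh] at hlt
  rcases mem_candidates.1 (best_spec hh).1 with ⟨hfree, ht⟩ | hheld
  · have hne : ν.mu m ≠ some b := fun hmb => by
      rw [Option.some_injective _ (hba.symm.trans ((ν.consistent m b).1 hmb))] at hlt
      exact lt_irrefl _ hlt
    exact hν.2 m b ⟨mrank_lt_of_free_of_target hν hI hG hfree ht hne, by rwa [hba]⟩
  · exact (hG a b hab).not_gt (hheld ▸ hlt)

end Stable

section Final

variable {M W : Type} [Fintype M] [Fintype W] {P : Pref M W}

lemma daFinal_invariant {ν : Matching M W} (hν : StableMatching P ν) :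
    DAInvariant P (daFinal P) ∧ HoldsAtMostStablePartner P ν (daFinal P) :=
  daRun_induction (Q := fun s => DAInvariant P s ∧ HoldsAtMostStablePartner P ν s)
    (fun _ ⟨hI, hG⟩ => ⟨daInvariant_daStep hI, holdsAtMostStablePartner_daStep hν hI hG⟩)
    _ _ ⟨daInvariant_daInit, holdsAtMostStablePartner_daInit hν⟩

lemma daMu_eq_some_iff (hI : DAInvariant P (daFinal P)) {a : M} {b : W} :
    daMu P a = some b ↔ (daFinal P).hold b = some a := by
  rw [daMu]
  split_ifs with hex
  · rw [Option.some_inj]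
    exact ⟨fun h => h ▸ hex.choose_spec,
      fun h => hI.hold_injective _ _ a hex.choose_spec h⟩
  · exact ⟨nofun, fun h => (hex ⟨b, h⟩).elim⟩

lemma mrank_daMu_le_none (hI : DAInvariant P (daFinal P)) (a : M) :
    P.mrank a (daMu P a) ≤ P.mrank a none := by
  rcases hμ : daMu P a with _ | b
  · exact le_rfl
  · obtain ⟨k, -, ht⟩ := hI.exists_proposal_of_hold b a ((daMu_eq_some_iff hI).1 hμ)
    exact (target_eq_some_iff.1 ht).1.le

lemma listPos_lt_next_of_mrank_lt_daMu (hI : DAInvariant P (daFinal P)) {a : M} {b : W}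
    (hb : mAcc P a b) (h : P.mrank a (some b) < P.mrank a (daMu P a)) :
    listPos P a b < (daFinal P).next a := by
  rcases hμ : daMu P a with _ | b'
  · refine listPos_lt_of_target_eq_none (finished_daFinal a fun b' hb' => ?_) hb
    exact Option.some_ne_none _ (((daMu_eq_some_iff hI).2 hb').symm.trans hμ)
  · obtain ⟨k, hk, ht⟩ := hI.exists_proposal_of_hold b' a ((daMu_eq_some_iff hI).1 hμ)
    obtain ⟨-, rfl⟩ := target_eq_some_iff.1 ht
    rw [hμ] at h
    exact (listPos_lt_listPos hb h).trans hk

end Final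

end DeferredAcceptance

open DeferredAcceptance

/-- The man-proposing deferred acceptance algorithm yields the
M-optimal stable matching: every man weakly prefers his DA partner to his
partner under any other stable matching. -/
theorem da_M_optimal {M W : Type} [Fintype M] [Fintype W] (P : Pref M W)
    (ν : Matching M W) (hν : StableMatching P ν) :
    ∀ a, P.mrank a (daMu P a) ≤ P.mrank a (ν.mu a) := by
  obtain ⟨hI, hG⟩ := daFinal_invariant hν
  intro a
  rcases hab : ν.mu a with _ | b
  · exact mrank_daMu_le_none hI a
  by_contra! hworse
  have hproposed := listPos_lt_next_of_mrank_lt_daMu hI (mAcc_of_stable hν hab) hworse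
  have hheld := (daMu_eq_some_iff hI).2 (hold_eq_of_listPos_lt_next hν hI hG hab hproposed)
  rw [hheld] at hworse
  exact lt_irrefl _ hworse
end

section
/- If a matching μ has a partial preimage H(μ) that is closed under weakly better replies, then under the man-proposing deferred acceptance mechanism μ has no blocking pair with respect to the true preferences. -/
open scoped Classical

noncomputable section RevelationGame

variable (M W : Type) [Fintype M] [Fintype W] [DecidableEq M] [DecidableEq W]

/-- Pure strategies in the preference revelation game: a player submits a
strict ranking of the opposite side together with the option of being single. -/
abbrev Strat : M ⊕ W → Type := fun i =>
  match i with
  | Sum.inl _ => Option W ≃ Fin (Fintype.card W + 1)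
  | Sum.inr _ => Option M ≃ Fin (Fintype.card M + 1)

instance instStratFintype : ∀ i : M ⊕ W, Fintype (Strat M W i)
  | Sum.inl _ => inferInstanceAs (Fintype (Option W ≃ Fin (Fintype.card W + 1)))
  | Sum.inr _ => inferInstanceAs (Fintype (Option M ≃ Fin (Fintype.card M + 1)))

variable {M W}

/-- The preference profile induced by a report profile. -/
def reportPref (r : ∀ i : M ⊕ W, Strat M W i) : Pref M W where
  mrank a o := ((r (Sum.inl a)) o : ℕ)
  wrank b o := ((r (Sum.inr b)) o : ℕ)
  minj a _ _ h := (r (Sum.inl a)).injective (Fin.val_injective h)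
  winj b _ _ h := (r (Sum.inr b)).injective (Fin.val_injective h)

/-- A mixed strategy profile: one probability distribution per player. -/
def IsMixed (x : ∀ i : M ⊕ W, Strat M W i → ℝ) : Prop :=
  ∀ i, (∀ h, 0 ≤ x i h) ∧ ∑ h, x i h = 1

/-- The mixed profile `x` is supported on the product set `H`. -/
def SupportedOn (x : ∀ i : M ⊕ W, Strat M W i → ℝ)
    (H : ∀ i : M ⊕ W, Set (Strat M W i)) : Prop :=
  ∀ i h, x i h ≠ 0 → h ∈ H i

/-- Expected payoff to player `i` under a mixed strategy profile `x`. -/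
def expPay (π : ∀ _ : M ⊕ W, (∀ j : M ⊕ W, Strat M W j) → ℝ) (i : M ⊕ W)
    (x : ∀ j : M ⊕ W, Strat M W j → ℝ) : ℝ :=
  ∑ s : ∀ j : M ⊕ W, Strat M W j, (∏ j, x j (s j)) * π i s

/-- The Dirac (pure) mixed strategy on `h`. -/
def delta {i : M ⊕ W} (h : Strat M W i) : Strat M W i → ℝ :=
  fun t => if t = h then 1 else 0

/-- `H` is closed under weakly better replies: any pure strategy of a player
that earns at least the average payoff against some mixed profile supported on
`H` already belongs to the player's component of `H`. -/
def CUWBR (π : ∀ _ : M ⊕ W, (∀ j : M ⊕ W, Strat M W j) → ℝ)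
    (H : ∀ i : M ⊕ W, Set (Strat M W i)) : Prop :=
  ∀ (i : M ⊕ W) (h : Strat M W i),
    (∃ x, IsMixed x ∧ SupportedOn x H ∧
      expPay π i x ≤ expPay π i (Function.update x i (delta h))) → h ∈ H i

/-- Payoffs of the preference revelation game induced by the man-proposing
deferred acceptance algorithm: each player's payoff is a strictly decreasing
function of the true-preference rank of the partner assigned by DA run on the
reported profile. -/
def daPayoff (P : Pref M W) (um : M → ℕ → ℝ) (uw : W → ℕ → ℝ) :
    ∀ _ : M ⊕ W, (∀ j : M ⊕ W, Strat M W j) → ℝ := fun i r =>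
  match i with
  | Sum.inl a => um a (P.mrank a (daMu (reportPref r) a))
  | Sum.inr b => uw b (P.wrank b (daNu (reportPref r) b))

end RevelationGame

/-!
Take a report profile `r ∈ H` and suppose `(a, b)` blocks `μ`. If `b` moves `a` to the top of
her reported list, deferred acceptance runs exactly as before until `a` proposes to `b`, after
which she holds him for good; so `b` ends with her old partner or with `a`, a weak improvement
in her true preferences. Closure puts the deviation into `H`, so the new profile still yields
`μ`. There `a` may declare `b` his only acceptable partner: he proposes to her first and she,
ranking him first, keeps him. This strictly improves `a`'s payoff, so this profile too lies in
`H` and yields `μ`, forcing `μ(a) = b`, which contradicts `a` preferring `b` to `μ(a)`.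
-/

open Function

section Promote

variable {α : Type} {n : ℕ}

lemma Fin.coe_cycleRange_of_ne {i j : Fin n} (h : j ≠ i) :
    (Fin.cycleRange i j : ℕ) = if j < i then (j : ℕ) + 1 else j := by
  split_ifs with hlt
  · exact Fin.coe_cycleRange_of_lt hlt
  · rw [Fin.cycleRange_of_gt (lt_of_le_of_ne (not_lt.1 hlt) h.symm)]

/-- The ranking `e` with `a` moved to the top; the relative order of all other entries is kept. -/
def promote (e : α ≃ Fin n) (a : α) : α ≃ Fin n :=
  e.trans (Fin.cycleRange (e a))

lemma promote_apply_self (e : α ≃ Fin n) (a : α) : (promote e a a : ℕ) = 0 := by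
  simp [promote, Fin.coe_cycleRange_of_le]

lemma promote_lt_iff (e : α ≃ Fin n) (a : α) {x y : α} (hx : x ≠ a) (hy : y ≠ a) :
    (promote e a x : ℕ) < promote e a y ↔ (e x : ℕ) < e y := by
  have hx' := Fin.val_ne_of_ne (e.injective.ne hx)
  have hy' := Fin.val_ne_of_ne (e.injective.ne hy)
  simp only [promote, Equiv.trans_apply, Fin.lt_def,
    Fin.coe_cycleRange_of_ne (e.injective.ne hx), Fin.coe_cycleRange_of_ne (e.injective.ne hy)]
  split_ifs <;> omega

lemma promote_apply_self_lt (e : α ≃ Fin n) (a : α) {x : α} (hx : x ≠ a) :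
    (promote e a a : ℕ) < promote e a x := by
  have hne : promote e a x ≠ promote e a a := (promote e a).injective.ne hx
  rw [promote_apply_self]
  exact Nat.pos_of_ne_zero fun h => hne (Fin.ext (h.trans (promote_apply_self e a).symm))

lemma promote_promote_lt_iff (e : α ≃ Fin n) {x y : α} (hxy : x ≠ y) (z : α) :
    (promote (promote e y) x z : ℕ) < promote (promote e y) x y ↔ z = x := by
  constructor
  · intro h
    by_contra hzx
    have hzy : z ≠ y := by rintro rfl; exact lt_irrefl _ h
    rw [promote_lt_iff _ _ hzx hxy.symm, promote_apply_self] at h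
    exact Nat.not_lt_zero _ h
  · rintro rfl
    exact promote_apply_self_lt _ _ hxy.symm

end Promote

section DeferredAcceptance

variable {M W : Type}

def RanksFirst (P : Pref M W) (b : W) (a : M) : Prop :=
  ∀ x, x ≠ some a → P.wrank b (some a) < P.wrank b x

section Best

variable [Fintype M]

lemma best_eq_some_iff (P : Pref M W) (b : W) (c : Finset M) (m : M) :
    best P b c = some m ↔ m ∈ c ∧ wAcc P b m ∧
      ∀ a ∈ c, wAcc P b a → P.wrank b (some m) ≤ P.wrank b (some a) := by
  unfold best
  split_ifs with hex
  · refine ⟨fun h => Option.some_inj.1 h ▸ hex.choose_spec, fun ⟨hm, hacc, hmin⟩ => ?_⟩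
    obtain ⟨hm', hacc', hmin'⟩ := hex.choose_spec
    exact P.winj b _ _ (le_antisymm (hmin' m hm hacc) (hmin _ hm' hacc'))
  · simpa using fun hm hacc hmin => hex ⟨m, hm, hacc, hmin⟩

lemma best_mem {P : Pref M W} {b : W} {c : Finset M} {m : M} (h : best P b c = some m) :
    m ∈ c :=
  ((best_eq_some_iff P b c m).1 h).1

lemma best_eq_of_ranksFirst {P : Pref M W} {b : W} {a : M} (htop : RanksFirst P b a)
    {c : Finset M} (hac : a ∈ c) : best P b c = some a := by
  refine (best_eq_some_iff P b c a).2 ⟨hac, htop none (by simp), fun a' _ _ => ?_⟩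
  rcases eq_or_ne a' a with rfl | hne
  · exact le_rfl
  · exact (htop _ (by simpa using hne)).le

lemma best_congr {P Q : Pref M W} {b : W} (h : P.wrank b = Q.wrank b) (c : Finset M) :
    best P b c = best Q b c := by
  unfold best wAcc
  rw [h]

lemma best_eq_of_lt_iff {P Q : Pref M W} {a : M} {b : W}
    (hlt : ∀ x y, x ≠ some a → y ≠ some a →
      (Q.wrank b x < Q.wrank b y ↔ P.wrank b x < P.wrank b y))
    {c : Finset M} (hac : a ∉ c) : best Q b c = best P b c := by
  have hne : ∀ m ∈ c, some m ≠ some a := fun m hm h => hac (Option.some_inj.1 h ▸ hm)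
  have hacc : ∀ m ∈ c, wAcc Q b m ↔ wAcc P b m := fun m hm => hlt _ _ (hne m hm) (by simp)
  have hle : ∀ m ∈ c, ∀ m' ∈ c,
      Q.wrank b (some m) ≤ Q.wrank b (some m') ↔ P.wrank b (some m) ≤ P.wrank b (some m') :=
    fun m hm m' hm' => not_lt.symm.trans ((hlt _ _ (hne m' hm') (hne m hm)).not.trans not_lt)
  refine Option.ext fun m => ?_
  rw [best_eq_some_iff, best_eq_some_iff]
  constructor
  · rintro ⟨hm, hmacc, hmin⟩
    exact ⟨hm, (hacc m hm).1 hmacc, fun a' ha' hacc' =>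
      (hle m hm a' ha').1 (hmin a' ha' ((hacc a' ha').2 hacc'))⟩
  · rintro ⟨hm, hmacc, hmin⟩
    exact ⟨hm, (hacc m hm).2 hmacc, fun a' ha' hacc' =>
      (hle m hm a' ha').2 (hmin a' ha' ((hacc a' ha').1 hacc'))⟩

end Best

section Target

variable [Fintype W]

lemma target_eq_some {P : Pref M W} {a : M} {k : ℕ} {c : W} (h : target P a k = some c) :
    mAcc P a c ∧ (Finset.univ.filter fun b' => mAcc P a b' ∧
      P.mrank a (some b') < P.mrank a (some c)).card = k := by
  unfold target at h
  split_ifs at h with hex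
  exact Option.some_inj.1 h ▸ hex.choose_spec

lemma target_congr {P Q : Pref M W} (h : P.mrank = Q.mrank) : target P = target Q := by
  unfold target mAcc
  rw [h]

lemma target_lt_card {P : Pref M W} {a : M} {k : ℕ} {c : W} (h : target P a k = some c) :
    k < Fintype.card W := by
  rw [← (target_eq_some h).2, ← Finset.card_univ]
  exact Finset.card_lt_card (Finset.filter_ssubset.2 ⟨c, Finset.mem_univ _, by simp⟩)

lemma target_zero_of_forall_mAcc_iff {P : Pref M W} {a : M} {b : W}
    (hacc : ∀ c, mAcc P a c ↔ c = b) : target P a 0 = some b := by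
  have hex : ∃ c, mAcc P a c ∧ (Finset.univ.filter fun b' => mAcc P a b' ∧
      P.mrank a (some b') < P.mrank a (some c)).card = 0 :=
    ⟨b, (hacc b).2 rfl, by simp +contextual [hacc]⟩
  unfold target
  rw [dif_pos hex]
  exact congrArg some ((hacc _).1 hex.choose_spec.1)

end Target

end DeferredAcceptance

section Run

variable {M W : Type} [Fintype M] [Fintype W]

lemma daRun_induction (P : Pref M W) (p : DAState M W → Prop)
    (hstep : ∀ s, p s → p (daStep P s)) : ∀ n s, p s → p (daRun P n s)
  | 0, _, hs => hs
  | n + 1, s, hs => by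
    rw [daRun]
    split_ifs
    · exact hs
    · exact daRun_induction P p hstep n _ (hstep s hs)

lemma hold_daStep_eq_some {P : Pref M W} {s : DAState M W} {b : W} {m : M}
    (h : (daStep P s).hold b = some m) :
    (IsFree s m ∧ target P m (s.next m) = some b) ∨ s.hold b = some m := by
  simpa using best_mem h

lemma next_le_daStep_next (P : Pref M W) (s : DAState M W) (a : M) :
    s.next a ≤ (daStep P s).next a := by
  simp only [daStep]
  split_ifs <;> omega

lemma daStep_next_le_card (P : Pref M W) {s : DAState M W} {a : M}
    (h : s.next a ≤ Fintype.card W) : (daStep P s).next a ≤ Fintype.card W := by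
  simp only [daStep]
  split_ifs with hprop
  · obtain ⟨c, hc⟩ := Option.isSome_iff_exists.1 hprop.2
    exact target_lt_card hc
  · exact h

lemma sum_next_lt_daStep {P : Pref M W} {s : DAState M W} (hf : ¬ Finished P s) :
    ∑ a, s.next a < ∑ a, (daStep P s).next a := by
  obtain ⟨a, hfree, hne⟩ : ∃ a, IsFree s a ∧ target P a (s.next a) ≠ none := by
    simpa [Finished] using hf
  refine Finset.sum_lt_sum (fun a _ => next_le_daStep_next P s a) ⟨a, Finset.mem_univ _, ?_⟩
  simp [daStep, hfree, Option.ne_none_iff_isSome.1 hne]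

/-- Each round before termination advances some man along his list, and no man moves past its
end, so `∑ a, s.next a` is a bounded, strictly increasing potential. -/
lemma finished_daRun (P : Pref M W) :
    ∀ n (s : DAState M W), (∀ a, s.next a ≤ Fintype.card W) →
      Fintype.card M * Fintype.card W < n + ∑ a, s.next a → Finished P (daRun P n s)
  | 0, s, hle, hlt => by
    have : ∑ a, s.next a ≤ Fintype.card M * Fintype.card W := by
      simpa using Finset.sum_le_sum fun a (_ : a ∈ Finset.univ) => hle a
    omega
  | n + 1, s, hle, hlt => by
    rw [daRun]
    split_ifs with hf
    · exact hf
    · refine finished_daRun P n _ (fun a => daStep_next_le_card P (hle a)) ?_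
      have := sum_next_lt_daStep hf
      omega

lemma finished_daFinal (P : Pref M W) : Finished P (daFinal P) :=
  finished_daRun P _ daInit (fun _ => Nat.zero_le _) (by simp [daInit, Nat.mul_succ])

lemma hold_daStep_of_ranksFirst {P : Pref M W} {b : W} {a : M} (htop : RanksFirst P b a)
    {s : DAState M W} (h : s.hold b = some a ∨ (IsFree s a ∧ target P a (s.next a) = some b)) :
    (daStep P s).hold b = some a :=
  best_eq_of_ranksFirst htop (by rcases h with h | h <;> simp [h])

lemma hold_daRun_of_ranksFirst {P : Pref M W} {b : W} {a : M} (htop : RanksFirst P b a)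
    (n : ℕ) {s : DAState M W} (h : s.hold b = some a) : (daRun P n s).hold b = some a :=
  daRun_induction P (fun s => s.hold b = some a)
    (fun _ hs => hold_daStep_of_ranksFirst htop (.inl hs)) n s h

lemma mAcc_of_hold_daFinal {P : Pref M W} {c : W} {m : M} (h : (daFinal P).hold c = some m) :
    mAcc P m c := by
  refine daRun_induction P (fun s => ∀ c m, s.hold c = some m → mAcc P m c) ?_ _ daInit
    (by simp [daInit]) c m h
  intro s hs c m hcm
  rcases hold_daStep_eq_some hcm with ⟨-, ht⟩ | hold
  · exact (target_eq_some ht).1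
  · exact hs c m hold

end Run

section Deviation

variable {M W : Type}

structure PromotesAt (P Q : Pref M W) (b : W) (a : M) : Prop where
  mrank_eq : Q.mrank = P.mrank
  wrank_eq_of_ne : ∀ c, c ≠ b → Q.wrank c = P.wrank c
  ranksFirst : RanksFirst Q b a
  lt_iff : ∀ x y, x ≠ some a → y ≠ some a →
    (Q.wrank b x < Q.wrank b y ↔ P.wrank b x < P.wrank b y)

variable [Fintype M] [Fintype W] {P Q : Pref M W} {b : W} {a : M}

lemma daStep_eq_of_promotesAt (h : PromotesAt P Q b a) {s : DAState M W}
    (hhold : s.hold b ≠ some a) (hprop : ¬ (IsFree s a ∧ target P a (s.next a) = some b)) :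
    daStep Q s = daStep P s := by
  have htarget : target Q = target P := target_congr h.mrank_eq
  unfold daStep
  congr 1
  · simp only [htarget]
  · funext c
    rw [htarget]
    by_cases hc : c = b
    · subst hc
      exact best_eq_of_lt_iff h.lt_iff (by simpa [hhold] using hprop)
    · exact best_congr (h.wrank_eq_of_ne c hc) _

/-- Until `a` proposes to `b`, the two runs coincide; once he does, `b` holds him for good. -/
lemma daRun_eq_or_hold_of_promotesAt (h : PromotesAt P Q b a) : ∀ n (s : DAState M W),
    s.hold b ≠ some a → daRun Q n s = daRun P n s ∨ (daRun Q n s).hold b = some a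
  | 0, _, _ => .inl rfl
  | n + 1, s, hs => by
    have htarget : target Q = target P := target_congr h.mrank_eq
    by_cases hf : Finished P s
    · have hfQ : Finished Q s := by rwa [Finished, htarget]
      simp [daRun, hf, hfQ]
    have hfQ : ¬ Finished Q s := by rwa [Finished, htarget]
    rw [daRun, daRun, if_neg hf, if_neg hfQ]
    by_cases hprop : IsFree s a ∧ target P a (s.next a) = some b
    · refine .inr (hold_daRun_of_ranksFirst h.ranksFirst n
        (hold_daStep_of_ranksFirst h.ranksFirst (.inr ?_)))
      rwa [htarget]
    · rw [daStep_eq_of_promotesAt h hs hprop]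
      refine daRun_eq_or_hold_of_promotesAt h n _ fun hhold => ?_
      rcases hold_daStep_eq_some hhold with hp | hhold'
      exacts [hprop hp, hs hhold']

lemma daNu_eq_or_eq_of_promotesAt (h : PromotesAt P Q b a) :
    daNu Q b = daNu P b ∨ daNu Q b = some a := by
  unfold daNu daFinal
  rcases daRun_eq_or_hold_of_promotesAt h _ daInit (by simp [daInit]) with e | e
  · exact .inl (by rw [e])
  · exact .inr e

lemma hold_daFinal_of_ranksFirst (htop : RanksFirst P b a) (ht : target P a 0 = some b) :
    (daFinal P).hold b = some a := by
  have key : (daFinal P).hold b = some a ∨ (IsFree (daFinal P) a ∧ (daFinal P).next a = 0) := by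
    refine daRun_induction P (fun s => s.hold b = some a ∨ (IsFree s a ∧ s.next a = 0)) ?_ _
      daInit (.inr ⟨by simp [IsFree, daInit], rfl⟩)
    rintro s (hs | ⟨hfree, hn⟩)
    · exact .inl (hold_daStep_of_ranksFirst htop (.inl hs))
    · exact .inl (hold_daStep_of_ranksFirst htop (.inr ⟨hfree, hn ▸ ht⟩))
  rcases key with hold | ⟨hfree, hn⟩
  · exact hold
  · have := finished_daFinal P a hfree
    simp [hn, ht] at this

lemma daMu_eq_of_forall_mAcc_iff (hacc : ∀ c, mAcc P a c ↔ c = b) (htop : RanksFirst P b a) :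
    daMu P a = some b := by
  have hex : ∃ c, (daFinal P).hold c = some a :=
    ⟨b, hold_daFinal_of_ranksFirst htop (target_zero_of_forall_mAcc_iff hacc)⟩
  unfold daMu
  rw [dif_pos hex]
  exact congrArg some ((hacc _).1 (mAcc_of_hold_daFinal hex.choose_spec))

end Deviation

section Game

variable {M W : Type} [Fintype M] [Fintype W]

lemma supportedOn_delta {r : ∀ i : M ⊕ W, Strat M W i} {H : ∀ i : M ⊕ W, Set (Strat M W i)}
    (hr : ∀ i, r i ∈ H i) : SupportedOn (fun j => delta (r j)) H := by
  intro j t ht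
  by_cases e : t = r j
  · exact e ▸ hr j
  · simp [delta, e] at ht

variable [DecidableEq M] [DecidableEq W]

lemma isMixed_delta (r : ∀ i : M ⊕ W, Strat M W i) : IsMixed fun j => delta (r j) :=
  fun j => ⟨fun t => by simp only [delta]; split_ifs <;> norm_num, by simp [delta]⟩

lemma expPay_delta (π : ∀ _ : M ⊕ W, (∀ j : M ⊕ W, Strat M W j) → ℝ) (i : M ⊕ W)
    (r : ∀ j : M ⊕ W, Strat M W j) : expPay π i (fun j => delta (r j)) = π i r := by
  unfold expPay
  rw [Finset.sum_eq_single_of_mem r (Finset.mem_univ _)]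
  · simp [delta]
  · intro s _ hs
    obtain ⟨j, hj⟩ : ∃ j, s j ≠ r j := Function.ne_iff.1 hs
    rw [Finset.prod_eq_zero (Finset.mem_univ j) (by simp [delta, hj]), zero_mul]

lemma update_delta (r : ∀ j : M ⊕ W, Strat M W j) (i : M ⊕ W) (h : Strat M W i) :
    update (fun j => delta (r j)) i (delta h) = fun j => delta (update r i h j) := by
  funext j
  rcases eq_or_ne j i with rfl | hj
  · simp
  · simp [hj]

lemma CUWBR.update_mem {π : ∀ _ : M ⊕ W, (∀ j : M ⊕ W, Strat M W j) → ℝ}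
    {H : ∀ i : M ⊕ W, Set (Strat M W i)} (hcl : CUWBR π H) {r : ∀ j : M ⊕ W, Strat M W j}
    (hr : ∀ j, r j ∈ H j) {i : M ⊕ W} {h : Strat M W i}
    (hle : π i r ≤ π i (update r i h)) : ∀ j, update r i h j ∈ H j := by
  have hh : h ∈ H i := hcl i h ⟨_, isMixed_delta r, supportedOn_delta hr, by
    rwa [expPay_delta, update_delta, expPay_delta]⟩
  exact (forall_update_iff r fun j t => t ∈ H j).2 ⟨hh, fun j _ => hr j⟩

lemma reportPref_update_inr_mrank (r : ∀ i : M ⊕ W, Strat M W i) (b : W)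
    (e : Strat M W (Sum.inr b)) :
    (reportPref (update r (Sum.inr b) e)).mrank = (reportPref r).mrank := by
  funext a o
  simp [reportPref]

lemma reportPref_update_inr_wrank_of_ne (r : ∀ i : M ⊕ W, Strat M W i) {b c : W}
    (e : Strat M W (Sum.inr b)) (hc : c ≠ b) :
    (reportPref (update r (Sum.inr b) e)).wrank c = (reportPref r).wrank c := by
  funext o
  simp [reportPref, hc]

lemma reportPref_update_inl_wrank (r : ∀ i : M ⊕ W, Strat M W i) (a : M)
    (e : Strat M W (Sum.inl a)) :
    (reportPref (update r (Sum.inl a) e)).wrank = (reportPref r).wrank := by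
  funext b o
  simp [reportPref]

lemma promotesAt_update_promote (r : ∀ i : M ⊕ W, Strat M W i) (b : W) (a : M) :
    PromotesAt (reportPref r)
      (reportPref (update r (Sum.inr b) (promote (r (Sum.inr b)) (some a)))) b a where
  mrank_eq := reportPref_update_inr_mrank r b _
  wrank_eq_of_ne _ hc := reportPref_update_inr_wrank_of_ne r _ hc
  ranksFirst x hx := by simpa [reportPref] using promote_apply_self_lt _ _ hx
  lt_iff x y hx hy := by simpa [reportPref] using promote_lt_iff _ _ hx hy

lemma mAcc_update_promote_promote_iff (r : ∀ i : M ⊕ W, Strat M W i) (a : M) (b c : W) :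
    mAcc (reportPref (update r (Sum.inl a)
      (promote (promote (r (Sum.inl a)) none) (some b)))) a c ↔ c = b := by
  simpa [mAcc, reportPref] using
    promote_promote_lt_iff (r (Sum.inl a)) (Option.some_ne_none b) (some c)

lemma ranksFirst_update_inl {r : ∀ i : M ⊕ W, Strat M W i} {b : W} {a : M}
    (h : RanksFirst (reportPref r) b a) (a' : M) (e : Strat M W (Sum.inl a')) :
    RanksFirst (reportPref (update r (Sum.inl a') e)) b a := by
  rwa [RanksFirst, reportPref_update_inl_wrank]

end Game

/-- If a matching `μ` has a partial preimage `H` that is closed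
under weakly better replies in the preference revelation game induced by the
man-proposing deferred acceptance mechanism (with payoffs strictly decreasing in
true-preference rank), then `μ` has no blocking pair w.r.t. the true preferences. -/
theorem cuwbr_no_blocking {M W : Type} [Fintype M] [Fintype W]
    [DecidableEq M] [DecidableEq W] (P : Pref M W)
    (um : M → ℕ → ℝ) (uw : W → ℕ → ℝ)
    (hum : ∀ a x y, x < y → um a y < um a x)
    (huw : ∀ b x y, x < y → uw b y < uw b x)
    (μ : Matching M W) (H : ∀ i : M ⊕ W, Set (Strat M W i))
    (hpp : ∀ r : ∀ i : M ⊕ W, Strat M W i, (∀ i, r i ∈ H i) →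
      daMu (reportPref r) = μ.mu ∧ daNu (reportPref r) = μ.nu)
    (hne : ∃ r : ∀ i : M ⊕ W, Strat M W i, ∀ i, r i ∈ H i)
    (hcl : CUWBR (daPayoff P um uw) H) :
    ∀ a b, ¬ Blocks P μ a b := by
  rintro a b ⟨hba, hab⟩
  obtain ⟨r, hr⟩ := hne
  set r₁ := update r (Sum.inr b) (promote (r (Sum.inr b)) (some a))
  have hPr₁ := promotesAt_update_promote r b a
  have hr₁ : ∀ i, r₁ i ∈ H i := by
    refine hcl.update_mem hr ?_
    show uw b (P.wrank b (daNu (reportPref r) b)) ≤ uw b (P.wrank b (daNu (reportPref r₁) b))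
    rcases daNu_eq_or_eq_of_promotesAt hPr₁ with h | h
    · rw [h]
    · rw [h, (hpp r hr).2]
      exact (huw b _ _ hab).le
  -- `a` ranks `b` first and staying single second: she is his only acceptable partner.
  set r₂ := update r₁ (Sum.inl a) (promote (promote (r₁ (Sum.inl a)) none) (some b))
  have hmu₂ : daMu (reportPref r₂) a = some b :=
    daMu_eq_of_forall_mAcc_iff (mAcc_update_promote_promote_iff r₁ a b)
      (ranksFirst_update_inl hPr₁.ranksFirst a _)
  have hr₂ : ∀ i, r₂ i ∈ H i := by
    refine hcl.update_mem hr₁ ?_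
    show um a (P.mrank a (daMu (reportPref r₁) a)) ≤ um a (P.mrank a (daMu (reportPref r₂) a))
    rw [(hpp r₁ hr₁).1, hmu₂]
    exact (hum a _ _ hba).le
  have hμa : μ.mu a = some b := by rw [← (hpp r₂ hr₂).1, hmu₂]
  exact lt_irrefl _ (hμa ▸ hba)
end
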